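/- arXiv:1301.6196 — 2 statements merged into one kernel-verified Lean document; each statement's English description precedes it below -/
import Mathlib

section
/- Let N ≥ 2d and let H = [[0_{d×d}, A],[B, C]] be unitary of size N. Then there exist unitary matrices U, V ∈ U(N−d) such that H = diag(I_d, U) · J · diag(I_d, V*), where J is the N×N permutation-like unitary matrix [[0, I_d, 0],[I_d, 0, 0],[0, 0, I_{N−2d}]]. -/
/-!
Since `H₁₁ = 0`, the `(1,1)` block of `H Hᴴ = 1` says that the rows of `A = H₁₂` are
orthonormal; complete them to a unitary `W`, so that `A Wᴴ = [I_d 0]`. Right multiplication by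
`J` brings columns `d+1, …, 2d` to the front, so `L = H · diag(I, Wᴴ) · J` is a unitary matrix
with `L₁₁ = I_d`. Such a matrix is block diagonal, `L = diag(I, U)`, and `J² = I` gives
`H = diag(I, U) · J · diag(I, W)`.
-/

open Matrix

/-- The `N×N` matrix `J = [[0, I_d, 0],[I_d, 0, 0],[0, 0, I_{N−2d}]]`, where
`N = d + (d + e)`. -/
noncomputable def Jmat (d e : ℕ) :
    Matrix (Fin d ⊕ (Fin d ⊕ Fin e)) (Fin d ⊕ (Fin d ⊕ Fin e)) ℂ :=
  Matrix.fromBlocks 0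
    (Matrix.of fun (i : Fin d) (j : Fin d ⊕ Fin e) => if Sum.inl i = j then 1 else 0)
    (Matrix.of fun (i : Fin d ⊕ Fin e) (j : Fin d) => if i = Sum.inl j then 1 else 0)
    (Matrix.fromBlocks 0 0 0 1)

namespace Matrix

open scoped ComplexOrder

theorem toBlocks₁₂_mul_fromBlocks_one {α l m n o : Type*} [Semiring α] [Fintype l] [Fintype n]
    [DecidableEq l] (M : Matrix (m ⊕ o) (l ⊕ n) α) (X : Matrix n n α) :
    (M * fromBlocks (1 : Matrix l l α) 0 0 X).toBlocks₁₂ = M.toBlocks₁₂ * X := by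
  conv_lhs => rw [← fromBlocks_toBlocks M, fromBlocks_multiply]
  simp

variable {𝕜 : Type*} [RCLike 𝕜] {m k : Type*} [Fintype m] [Fintype k] [DecidableEq m]
  [DecidableEq k]

theorem eq_fromBlocks_one_of_toBlocks₁₁_eq_one {M : Matrix (m ⊕ k) (m ⊕ k) 𝕜}
    (hM : M ∈ unitaryGroup (m ⊕ k) 𝕜) (h₁₁ : M.toBlocks₁₁ = 1) :
    M = fromBlocks 1 0 0 M.toBlocks₂₂ := by
  rw [← fromBlocks_toBlocks M, h₁₁] at hM ⊢
  have hrows := mem_unitaryGroup_iff.mp hM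
  have hcols := mem_unitaryGroup_iff'.mp hM
  simp only [star_eq_conjTranspose, fromBlocks_conjTranspose, fromBlocks_multiply,
    ← fromBlocks_one, fromBlocks_inj, conjTranspose_one, Matrix.one_mul, add_eq_left,
    self_mul_conjTranspose_eq_zero, conjTranspose_mul_self_eq_zero] at hrows hcols
  rw [hrows.1, hcols.1]
  simp

theorem fromBlocks_one_mem_unitaryGroup_iff {U : Matrix k k 𝕜} :
    fromBlocks (1 : Matrix m m 𝕜) 0 0 U ∈ unitaryGroup (m ⊕ k) 𝕜 ↔ U ∈ unitaryGroup k 𝕜 := by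
  simp [mem_unitaryGroup_iff', star_eq_conjTranspose, fromBlocks_conjTranspose,
    fromBlocks_multiply, ← fromBlocks_one, fromBlocks_inj]

theorem exists_mem_unitaryGroup_toRows₁_eq (A : Matrix m (m ⊕ k) 𝕜) (hA : A * Aᴴ = 1) :
    ∃ W ∈ unitaryGroup (m ⊕ k) 𝕜, W.toRows₁ = A := by
  let v : m ⊕ k → EuclideanSpace 𝕜 (m ⊕ k) := Sum.elim (fun i => WithLp.toLp 2 (A i)) 0
  have hv : Orthonormal 𝕜 ((Set.range Sum.inl).domRestrict v) := by
    rw [orthonormal_iff_ite]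
    rintro ⟨_, i, rfl⟩ ⟨_, j, rfl⟩
    show inner 𝕜 (WithLp.toLp 2 (A i)) (WithLp.toLp 2 (A j)) = _
    rw [EuclideanSpace.inner_toLp_toLp, show A j ⬝ᵥ star (A i) = (A * Aᴴ) j i from rfl, hA]
    simp [one_apply, eq_comm, Subtype.ext_iff]
  obtain ⟨b, hb⟩ := hv.exists_orthonormalBasis_extension_of_card_eq (by simp)
  -- the change-of-basis matrix from the standard basis has the vectors `b j` as its columns
  let e := EuclideanSpace.basisFun (m ⊕ k) 𝕜
  refine ⟨(e.toBasis.toMatrix b)ᵀ,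
    transpose_mem_unitaryGroup_iff.mpr (e.toMatrix_orthonormalBasis_mem_unitary b), ?_⟩
  ext i j
  simp [e, Module.Basis.toMatrix_apply, hb (Sum.inl i) ⟨i, rfl⟩, v]

end Matrix

section Jmat

variable (d e : ℕ)

theorem conjTranspose_Jmat : (Jmat d e)ᴴ = Jmat d e := by
  ext (i | i | i) (j | j | j) <;> simp [Jmat, one_apply, eq_comm]

theorem Jmat_mul_self : Jmat d e * Jmat d e = 1 := by
  ext (i | i | i) (j | j | j) <;> simp [Jmat, mul_apply, Fintype.sum_sum_type, one_apply]

theorem Jmat_mem_unitaryGroup : Jmat d e ∈ unitaryGroup (Fin d ⊕ (Fin d ⊕ Fin e)) ℂ := by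
  rw [mem_unitaryGroup_iff, star_eq_conjTranspose, conjTranspose_Jmat, Jmat_mul_self]

theorem toBlocks₁₁_mul_Jmat (M : Matrix (Fin d ⊕ (Fin d ⊕ Fin e)) (Fin d ⊕ (Fin d ⊕ Fin e)) ℂ) :
    (M * Jmat d e).toBlocks₁₁ = M.toBlocks₁₂.toCols₁ := by
  ext i j
  simp [Jmat, mul_apply, Fintype.sum_sum_type, toBlocks₁₁, toBlocks₁₂, toCols₁]

end Jmat

/-- If `H = [[0_{d×d}, A],[B, C]]` is unitary of size `N = d + (d + e)` (so `N ≥ 2d`),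
then there are unitary `U, V ∈ U(N−d)` with `H = diag(I_d, U) · J · diag(I_d, V*)`. -/
theorem stmt5 (d e : ℕ)
    (H : Matrix (Fin d ⊕ (Fin d ⊕ Fin e)) (Fin d ⊕ (Fin d ⊕ Fin e)) ℂ)
    (hH : H ∈ Matrix.unitaryGroup (Fin d ⊕ (Fin d ⊕ Fin e)) ℂ)
    (h0 : H.toBlocks₁₁ = 0) :
    ∃ U V : Matrix (Fin d ⊕ Fin e) (Fin d ⊕ Fin e) ℂ,
      U ∈ Matrix.unitaryGroup (Fin d ⊕ Fin e) ℂ ∧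
      V ∈ Matrix.unitaryGroup (Fin d ⊕ Fin e) ℂ ∧
      H = Matrix.fromBlocks 1 0 0 U * Jmat d e * Matrix.fromBlocks 1 0 0 Vᴴ := by
  have hA : H.toBlocks₁₂ * H.toBlocks₁₂ᴴ = 1 := by
    have h := mem_unitaryGroup_iff.mp hH
    rw [← fromBlocks_toBlocks H, h0] at h
    simp only [star_eq_conjTranspose, fromBlocks_conjTranspose, fromBlocks_multiply,
      ← fromBlocks_one, fromBlocks_inj] at h
    simpa using h.1
  obtain ⟨W, hW, hWA⟩ := exists_mem_unitaryGroup_toRows₁_eq _ hA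
  have hD : fromBlocks (1 : Matrix (Fin d) (Fin d) ℂ) 0 0 Wᴴ ∈ unitaryGroup _ ℂ :=
    fromBlocks_one_mem_unitaryGroup_iff.mpr (Unitary.star_mem hW)
  set L := H * fromBlocks 1 0 0 Wᴴ * Jmat d e with hL_def
  have hL : L ∈ unitaryGroup _ ℂ := mul_mem (mul_mem hH hD) (Jmat_mem_unitaryGroup d e)
  have hL₁₁ : L.toBlocks₁₁ = 1 := by
    rw [toBlocks₁₁_mul_Jmat, toBlocks₁₂_mul_fromBlocks_one, ← hWA]
    ext i j
    exact (congrFun₂ (mem_unitaryGroup_iff.mp hW) (Sum.inl i) (Sum.inl j)).trans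
      (by simp [one_apply])
  have hL_diag := eq_fromBlocks_one_of_toBlocks₁₁_eq_one hL hL₁₁
  refine ⟨L.toBlocks₂₂, Wᴴ, fromBlocks_one_mem_unitaryGroup_iff.mp (hL_diag ▸ hL),
    Unitary.star_mem hW, ?_⟩
  have hDD := mem_unitaryGroup_iff.mp hD
  rw [star_eq_conjTranspose, fromBlocks_conjTranspose, conjTranspose_one, conjTranspose_zero,
    conjTranspose_zero] at hDD
  rw [← hL_diag, hL_def, mul_assoc (H * _) (Jmat d e), Jmat_mul_self, mul_one, mul_assoc, hDD,
    mul_one]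
end

section
/- Let N ≥ 2d. The set of N×N unitary matrices whose upper-left d×d block is zero is a smooth real manifold of dimension N² − 2d², hence of real codimension N² inside the affine space T of N×N complex matrices with zero upper-left d×d block (which has real dimension 2N² − 2d²). -/
/-!
The set is the zero set of `Φ H = (Herm (H⋆ H - 1), upper-left d×d block of H)`, a map from
`M_N(ℂ)` (real dimension `2N²`) to `Herm_N × M_d(ℂ)` (real dimension `N² + 2d²`). At a zero `a`
the derivative `Z ↦ (Herm (a⋆ Z + Z⋆ a), block Z)` is onto: for a skew-Hermitian `S`,
`Z = a (W/2 + S)` solves `a⋆ Z + Z⋆ a = W`, and with `p` the projection onto the first `d`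
coordinates, `S = M - M⋆` for `M = a⋆ p C p` has `p a S p = p C p` because `p a p = 0` kills the
`M⋆` term. The implicit function theorem then gives charts modelled on the kernel of the
derivative, of dimension `N² - 2d²`.
-/

open Module Set Matrix

namespace OpenPartialHomeomorph

variable {X Y Z : Type*} [TopologicalSpace X] [TopologicalSpace Y] [TopologicalSpace Z]

open Classical in
/-- `x₀` is the junk value of the inverse off the target. -/
noncomputable def sliceChart (ψ : OpenPartialHomeomorph X (Y × Z)) (y : Y) {p : X → Prop}
    (hp : ∀ x, p x ↔ (ψ x).1 = y) (x₀ : Subtype p) : OpenPartialHomeomorph (Subtype p) Z where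
  toFun x := (ψ x).2
  invFun z := if hz : (y, z) ∈ ψ.target then
    ⟨ψ.symm (y, z), (hp _).2 (by rw [ψ.right_inv hz])⟩ else x₀
  source := Subtype.val ⁻¹' ψ.source
  target := {z | (y, z) ∈ ψ.target}
  map_source' x hx := by
    show (y, (ψ x).2) ∈ ψ.target
    rw [← (hp x).1 x.2]
    exact ψ.map_source hx
  map_target' z (hz : (y, z) ∈ ψ.target) := by
    rw [dif_pos hz]
    exact ψ.map_target hz
  left_inv' x hx := by
    have hψx : (y, (ψ x).2) = ψ x := by rw [← (hp x).1 x.2]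
    have hz : (y, (ψ x).2) ∈ ψ.target := hψx ▸ ψ.map_source hx
    rw [dif_pos hz]
    exact Subtype.ext (show ψ.symm (y, (ψ x).2) = x by rw [hψx, ψ.left_inv hx])
  right_inv' z (hz : (y, z) ∈ ψ.target) := by
    simp only [dif_pos hz, ψ.right_inv hz]
  open_source := ψ.open_source.preimage continuous_subtype_val
  open_target := ψ.open_target.preimage (Continuous.prodMk_right y)
  continuousOn_toFun :=
    continuous_snd.comp_continuousOn (ψ.continuousOn.comp continuous_subtype_val.continuousOn
      fun _ => id)
  continuousOn_invFun := by
    rw [Topology.IsEmbedding.subtypeVal.isInducing.continuousOn_iff]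
    refine (ψ.continuousOn_symm.comp (Continuous.prodMk_right y).continuousOn fun _ => id).congr
      fun z (hz : (y, z) ∈ ψ.target) => ?_
    simp [dif_pos hz]

end OpenPartialHomeomorph

theorem nonempty_chartedSpace_of_hasStrictFDerivAt {E F : Type*}
    [NormedAddCommGroup E] [NormedSpace ℝ E] [FiniteDimensional ℝ E]
    [NormedAddCommGroup F] [NormedSpace ℝ F] [FiniteDimensional ℝ F]
    {f : E → F} {p : E → Prop} (hp : ∀ x, p x ↔ f x = 0) {k : ℕ}
    (hk : finrank ℝ E = finrank ℝ F + k)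
    (hf : ∀ x, p x → ∃ f' : E →L[ℝ] F, HasStrictFDerivAt f f' x ∧ f'.range = ⊤) :
    Nonempty (ChartedSpace (EuclideanSpace ℝ (Fin k)) (Subtype p)) := by
  choose f' hf' hsurj using hf
  have hker (x : Subtype p) :
      finrank ℝ (f' x x.2).ker = finrank ℝ (EuclideanSpace ℝ (Fin k)) := by
    have := (f' x x.2).finrank_range_add_finrank_ker
    rw [hsurj, finrank_top] at this
    rw [finrank_euclideanSpace_fin]
    omega
  let chart (x : Subtype p) : OpenPartialHomeomorph (Subtype p) (EuclideanSpace ℝ (Fin k)) :=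
    ((hf' x x.2).implicitToOpenPartialHomeomorph f _ (hsurj x x.2)).sliceChart 0
        (fun z => by rw [hp, HasStrictFDerivAt.implicitToOpenPartialHomeomorph_fst]) x
      |>.transHomeomorph (ContinuousLinearEquiv.ofFinrankEq (hker x)).toHomeomorph
  exact ⟨{
    atlas := range chart
    chartAt := chart
    mem_chart_source x := (hf' x x.2).mem_implicitToOpenPartialHomeomorph_source (hsurj x x.2)
    chart_mem_atlas x := mem_range_self x }⟩

section StarRing

variable {A : Type*} [Ring A] [StarRing A] {p u : A}

theorem exists_mem_skewAdjoint_corner_mul_eq (hp : IsSelfAdjoint p) (hpp : IsIdempotentElem p)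
    (hu : u * star u = 1) (hpu : p * u * p = 0) (c : A) :
    ∃ s ∈ skewAdjoint A, p * (u * s) * p = p * c * p := by
  set m := star u * (p * c * p)
  refine ⟨m - star m, skewAdjoint.mem_iff.2 (by rw [star_sub, star_star, neg_sub]), ?_⟩
  have hm : p * (u * m) * p = p * c * p :=
    calc p * (u * m) * p = p * p * c * (p * p) := by
          simp only [m, ← mul_assoc u, hu, one_mul, mul_assoc]
      _ = p * c * p := by rw [hpp.eq]
  have hm_star : p * (u * star m) * p = 0 := by
    simp only [m, star_mul, star_star, hp.star_eq]
    rw [show p * (u * (p * (star c * p) * u)) * p = p * u * p * star c * (p * u * p) by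
      simp only [mul_assoc], hpu, zero_mul, zero_mul]
  rw [mul_sub, mul_sub, sub_mul, hm, hm_star, sub_zero]

variable [Algebra ℝ A] [StarModule ℝ A]

theorem exists_star_mul_add_star_mul_eq_and_corner_eq (hp : IsSelfAdjoint p)
    (hpp : IsIdempotentElem p) (hu : u ∈ unitary A) (hpu : p * u * p = 0) {w : A}
    (hw : IsSelfAdjoint w) (c : A) :
    ∃ z, star u * z + star z * u = w ∧ p * z * p = p * c * p := by
  obtain ⟨s, hs, hps⟩ := exists_mem_skewAdjoint_corner_mul_eq hp hpp
    (Unitary.mul_star_self_of_mem hu) hpu (c - (2⁻¹ : ℝ) • (u * w))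
  set x := (2⁻¹ : ℝ) • w + s
  have hu₁ : star u * u = 1 := Unitary.star_mul_self_of_mem hu
  refine ⟨u * x, ?_, ?_⟩
  · calc star u * (u * x) + star (u * x) * u = x + star x := by
          rw [star_mul, ← mul_assoc, hu₁, one_mul, mul_assoc, hu₁, mul_one]
      _ = w := by
          rw [star_add, star_smul, star_trivial, hw.star_eq, skewAdjoint.mem_iff.1 hs]
          module
  · rw [mul_add, mul_add, add_mul, hps, mul_sub, sub_mul, mul_smul_comm, add_sub_cancel]

end StarRing

section CornerBlock

variable {n : Type*} (s : n → Prop)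

def cornerBlock (R : Type*) {α : Type*} [Semiring R] [AddCommMonoid α] [Module R α] :
    Matrix n n α →ₗ[R] Matrix {i // s i} {i // s i} α where
  toFun X := X.submatrix Subtype.val Subtype.val
  map_add' _ _ := rfl
  map_smul' _ _ := rfl

variable {s} {R α : Type*} [Semiring R] [AddCommMonoid α] [Module R α]

@[simp]
theorem cornerBlock_apply (X : Matrix n n α) (i j : {i // s i}) : cornerBlock s R X i j = X i j :=
  rfl

theorem cornerBlock_eq_zero_iff {X : Matrix n n α} :
    cornerBlock s R X = 0 ↔ ∀ i j, s i → s j → X i j = 0 :=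
  ⟨fun h i j hi hj => congr_fun₂ h ⟨i, hi⟩ ⟨j, hj⟩,
    fun h => Matrix.ext fun i j => h i j i.2 j.2⟩

theorem cornerBlock_surjective : Function.Surjective (cornerBlock s R (α := α)) := by
  classical
  exact fun C => ⟨of fun i j => if h : s i ∧ s j then C ⟨i, h.1⟩ ⟨j, h.2⟩ else 0,
    by ext i j; simp [i.2, j.2]⟩

theorem finrank_ker_cornerBlock [Fintype n] [DecidablePred s] :
    finrank ℝ (LinearMap.ker (cornerBlock s ℝ (α := ℂ))) + 2 * Fintype.card {i // s i} ^ 2 =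
      2 * Fintype.card n ^ 2 := by
  have := (cornerBlock s ℝ (α := ℂ)).finrank_range_add_finrank_ker
  rw [LinearMap.range_eq_top.2 cornerBlock_surjective, finrank_top, finrank_matrix,
    finrank_matrix, Complex.finrank_real_complex] at this
  linarith

end CornerBlock

section CornerProj

variable {n : Type*} [DecidableEq n] (s : n → Prop) [DecidablePred s] (α : Type*)

def cornerProj [Zero α] [One α] : Matrix n n α := diagonal fun i => if s i then 1 else 0

variable {s α}

theorem isSelfAdjoint_cornerProj [Semiring α] [StarRing α] : IsSelfAdjoint (cornerProj s α) := by
  rw [IsSelfAdjoint, cornerProj, star_eq_conjTranspose, diagonal_conjTranspose]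
  congr 1 with i
  by_cases h : s i <;> simp [h]

variable [Fintype n] [Semiring α]

theorem isIdempotentElem_cornerProj : IsIdempotentElem (cornerProj s α) := by
  rw [IsIdempotentElem, cornerProj, diagonal_mul_diagonal]
  congr 1 with i
  split_ifs <;> simp

theorem cornerProj_mul_mul_cornerProj_apply (X : Matrix n n α) (i j : n) :
    (cornerProj s α * X * cornerProj s α) i j = if s i ∧ s j then X i j else 0 := by
  by_cases hi : s i <;> by_cases hj : s j <;> simp [cornerProj, diagonal_mul, mul_diagonal, hi, hj]

theorem cornerProj_mul_mul_cornerProj_eq_zero_iff {X : Matrix n n α} :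
    cornerProj s α * X * cornerProj s α = 0 ↔ ∀ i j, s i → s j → X i j = 0 := by
  simp [← Matrix.ext_iff, cornerProj_mul_mul_cornerProj_apply]

theorem cornerBlock_cornerProj_mul_mul_cornerProj (R : Type*) [Semiring R] [Module R α]
    (X : Matrix n n α) :
    cornerBlock s R (cornerProj s α * X * cornerProj s α) = cornerBlock s R X := by
  ext i j
  simp [cornerProj_mul_mul_cornerProj_apply, i.2, j.2]

end CornerProj

section ComplexStarModule

variable {A : Type*} [AddCommGroup A] [Module ℂ A] [StarAddMonoid A] [StarModule ℂ A]
  [FiniteDimensional ℂ A]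

instance : FiniteDimensional ℝ (selfAdjoint A) := .of_surjective realPart realPart_surjective

theorem finrank_real_selfAdjoint : finrank ℝ (selfAdjoint A) = finrank ℂ A := by
  let e : A ≃ₗ[ℝ] selfAdjoint A × selfAdjoint A :=
    LinearEquiv.ofBijective (realPart.prod imaginaryPart)
      ⟨fun x y hxy => ComplexStarModule.ext (congrArg Prod.fst hxy) (congrArg Prod.snd hxy),
       fun ⟨x, y⟩ => ⟨(x : A) + Complex.I • (y : A),
         by simp [realPart_I_smul, imaginaryPart_I_smul]⟩⟩
  have := e.finrank_eq
  rw [finrank_prod, finrank_real_of_complex] at this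
  omega

end ComplexStarModule

section UnitaryCorner

variable {n : Type*} [Fintype n] [DecidableEq n] (s : n → Prop)

noncomputable def unitaryCornerMap (H : Matrix n n ℂ) :
    selfAdjoint (Matrix n n ℂ) × Matrix {i // s i} {i // s i} ℂ :=
  (selfAdjointPart ℝ (star H * H - 1), cornerBlock s ℝ H)

variable {s}

theorem unitaryCornerMap_eq_zero_iff {H : Matrix n n ℂ} :
    unitaryCornerMap s H = 0 ↔ H ∈ unitaryGroup n ℂ ∧ ∀ i j, s i → s j → H i j = 0 := by
  have hsa : IsSelfAdjoint (star H * H - 1) := (IsSelfAdjoint.star_mul_self H).sub (.one _)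
  rw [unitaryCornerMap, Prod.mk_eq_zero, hsa.selfAdjointPart_apply ℝ,
    ← cornerBlock_eq_zero_iff (R := ℝ), mem_unitaryGroup_iff', ← sub_eq_zero (b := 1)]
  exact and_congr_left' Subtype.ext_iff

variable [DecidablePred s]

-- The Frobenius norm makes `Matrix n n ℂ` a normed `ℝ`-algebra with continuous `star`, and its
-- topology is definitionally the product topology of the statement.
open scoped Matrix.Norms.Frobenius

theorem exists_hasStrictFDerivAt_unitaryCornerMap {a : Matrix n n ℂ} (ha : a ∈ unitaryGroup n ℂ)
    (hcorner : ∀ i j, s i → s j → a i j = 0) :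
    ∃ f' : Matrix n n ℂ →L[ℝ] selfAdjoint (Matrix n n ℂ) × Matrix {i // s i} {i // s i} ℂ,
      HasStrictFDerivAt (unitaryCornerMap s) f' a ∧ f'.range = ⊤ := by
  have hstar_mul := ((starL' ℝ : Matrix n n ℂ ≃L[ℝ] _).hasStrictFDerivAt (x := a)).mul'
    (hasStrictFDerivAt_id a)
  have hΦ := ((selfAdjointPartL ℝ (Matrix n n ℂ)).hasStrictFDerivAt.comp a
    (hstar_mul.sub_const 1)).prodMk (cornerBlock s ℝ).toContinuousLinearMap.hasStrictFDerivAt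
  refine ⟨_, hΦ, LinearMap.range_eq_top.2 ?_⟩
  rintro ⟨⟨w, hw⟩, C⟩
  obtain ⟨c, rfl⟩ := cornerBlock_surjective (R := ℝ) C
  obtain ⟨z, hz, hpz⟩ := exists_star_mul_add_star_mul_eq_and_corner_eq isSelfAdjoint_cornerProj
    isIdempotentElem_cornerProj ha (cornerProj_mul_mul_cornerProj_eq_zero_iff.2 hcorner) hw c
  refine ⟨z, Prod.ext ?_ ?_⟩
  · show selfAdjointPart ℝ (star a * z + star z * a) = ⟨w, hw⟩
    rw [hz]
    exact IsSelfAdjoint.selfAdjointPart_apply ℝ hw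
  · show cornerBlock s ℝ z = cornerBlock s ℝ c
    rw [← cornerBlock_cornerProj_mul_mul_cornerProj, hpz, cornerBlock_cornerProj_mul_mul_cornerProj]

theorem nonempty_chartedSpace_unitary_corner {k : ℕ}
    (hk : Fintype.card n ^ 2 = 2 * Fintype.card {i // s i} ^ 2 + k) :
    Nonempty (ChartedSpace (EuclideanSpace ℝ (Fin k))
      {H : Matrix n n ℂ // H ∈ unitaryGroup n ℂ ∧ ∀ i j, s i → s j → H i j = 0}) := by
  refine nonempty_chartedSpace_of_hasStrictFDerivAt (f := unitaryCornerMap s)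
    (fun _ => unitaryCornerMap_eq_zero_iff.symm) ?_
    fun _ hH => exists_hasStrictFDerivAt_unitaryCornerMap hH.1 hH.2
  rw [finrank_prod, finrank_real_selfAdjoint, finrank_matrix, finrank_matrix, finrank_matrix,
    finrank_self, Complex.finrank_real_complex]
  linear_combination hk

end UnitaryCorner

/-- For `N ≥ 2d`, the set of `N×N` unitary matrices whose upper-left `d×d` block is
zero is a manifold of real dimension `N² − 2d²` (it admits an atlas modelled on
`ℝ^{N²−2d²}`); moreover the affine space `T` of `N×N` complex matrices with vanishing
upper-left `d×d` block has real dimension `2N² − 2d²`, so the codimension is `N²`. -/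
theorem stmt7 (d N : ℕ) (h : 2 * d ≤ N) :
    Nonempty (ChartedSpace (EuclideanSpace ℝ (Fin (N ^ 2 - 2 * d ^ 2)))
      {H : Matrix (Fin N) (Fin N) ℂ //
        H ∈ Matrix.unitaryGroup (Fin N) ℂ ∧
        ∀ i j : Fin N, (i : ℕ) < d → (j : ℕ) < d → H i j = 0}) ∧
    (∃ T : Submodule ℝ (Matrix (Fin N) (Fin N) ℂ),
      (∀ H, H ∈ T ↔ ∀ i j : Fin N, (i : ℕ) < d → (j : ℕ) < d → H i j = 0) ∧
      Module.finrank ℝ T = 2 * N ^ 2 - 2 * d ^ 2) ∧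
    (N ^ 2 - 2 * d ^ 2) + N ^ 2 = 2 * N ^ 2 - 2 * d ^ 2 := by
  have hcard : Fintype.card {i : Fin N // (i : ℕ) < d} = d := Fintype.card_fin_lt_of_le (by omega)
  have hsq : 2 * d ^ 2 ≤ N ^ 2 := by nlinarith
  have hker := finrank_ker_cornerBlock (s := fun i : Fin N => (i : ℕ) < d)
  rw [hcard, Fintype.card_fin] at hker
  refine ⟨nonempty_chartedSpace_unitary_corner (by rw [Fintype.card_fin, hcard]; omega),
    ⟨LinearMap.ker (cornerBlock _ ℝ), fun _ => cornerBlock_eq_zero_iff, by omega⟩, by omega⟩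
end
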